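/- In the AI regulation game with quadratic costs under regulation threshold θD ≥ 0, assume C1 is invertible. Let γ0 = (α0, β0) ∈ ℝ², set κ := max(β0, θD), and let γ1* = (α1*, β1*) maximize γ1 ↦ U_D(γ0, γ1) over the feasible set F(γ0, θD) = {(α, β) ∈ ℝ² : α ≥ α0 and β ≥ κ}. Then γ1* belongs to the four-element candidate set { γ0 + ((1−δ)/2)·C1⁻¹·r, (α0, β0 + (1−δ)·rβ/(2·c1bb)), (α0 + (1−δ)·rα/(2·c1aa) − (c1ab/c1aa)·max(0, θD − β0), κ), (α0, κ) }. -/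

import Mathlib

open Matrix

/-- The domain specialist's utility
`U_D(γ0, γ1) = (1−δ)·(rα·α1 + rβ·β1) − (γ1−γ0)ᵀ C1 (γ1−γ0)`. -/
noncomputable def UD (c1aa c1ab c1bb rα rβ δ : ℝ) (γ0 γ1 : Fin 2 → ℝ) : ℝ :=
  (1 - δ) * (rα * γ1 0 + rβ * γ1 1)
    - (γ1 - γ0) ⬝ᵥ ((!![c1aa, c1ab; c1ab, c1bb] : Matrix (Fin 2) (Fin 2) ℝ) *ᵥ (γ1 - γ0))

/-!
Along each coordinate direction the utility is a one-variable quadratic, and a maximizer over a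
half-line `[κ, ∞)` either sits at `κ` or is an interior local maximum, where the derivative
vanishes. So for each coordinate either its constraint binds or its first-order condition holds;
when neither constraint binds, the two conditions together read `C1 (γ1 − γ0) = ((1−δ)/2) r`.
-/

open Set Function

theorem IsMaxOn.eq_or_hasDerivAt_eq_zero_of_Ici {f : ℝ → ℝ} {f' κ s : ℝ}
    (hmax : IsMaxOn f (Ici κ) s) (hs : κ ≤ s) (hf : HasDerivAt f f' s) : s = κ ∨ f' = 0 := by
  rcases hs.eq_or_lt with h | h
  · exact .inl h.symm
  · exact .inr ((hmax.isLocalMax (Ici_mem_nhds h)).hasDerivAt_eq_zero hf)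

theorem hasDerivAt_quadratic (a b c x : ℝ) :
    HasDerivAt (fun t ↦ a * t ^ 2 + b * t + c) (2 * a * x + b) x := by
  have h := (((hasDerivAt_pow 2 x).const_mul a).add ((hasDerivAt_id' x).const_mul b)).add_const c
  exact h.congr_deriv (by norm_num; ring)

theorem Matrix.eq_add_smul_inv_mulVec_of_mulVec_sub_eq {n R : Type*} [Fintype n] [DecidableEq n]
    [CommRing R] {A : Matrix n n R} (hA : IsUnit A.det) {x y b : n → R} {c : R}
    (h : A *ᵥ (x - y) = c • b) : x = y + c • (A⁻¹ *ᵥ b) := by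
  rw [← mulVec_smul, ← h, mulVec_mulVec, nonsing_inv_mul A hA, one_mulVec, add_sub_cancel]

section SpecialistUtility

variable (c1aa c1ab c1bb rα rβ δ : ℝ) (γ0 γ : Fin 2 → ℝ)

theorem UD_eq :
    UD c1aa c1ab c1bb rα rβ δ γ0 γ =
      (1 - δ) * (rα * γ 0 + rβ * γ 1)
        - (c1aa * (γ 0 - γ0 0) ^ 2 + 2 * c1ab * (γ 0 - γ0 0) * (γ 1 - γ0 1)
            + c1bb * (γ 1 - γ0 1) ^ 2) := by
  rw [UD, mulVec_fin_two, vec2_dotProduct]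
  simp only [of_apply, cons_val_zero, cons_val_one, Pi.sub_apply]
  ring

theorem hasDerivAt_UD_update_zero :
    HasDerivAt (fun t ↦ UD c1aa c1ab c1bb rα rβ δ γ0 (update γ 0 t))
      ((1 - δ) * rα - 2 * (c1aa * (γ 0 - γ0 0) + c1ab * (γ 1 - γ0 1))) (γ 0) := by
  convert hasDerivAt_quadratic (-c1aa) ((1 - δ) * rα + 2 * c1aa * γ0 0 - 2 * c1ab * (γ 1 - γ0 1))
    (UD c1aa c1ab c1bb rα rβ δ γ0 (update γ 0 0)) (γ 0) using 1
  · funext t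
    simp only [UD_eq, update_self, update_of_ne one_ne_zero]
    ring
  · ring

theorem hasDerivAt_UD_update_one :
    HasDerivAt (fun t ↦ UD c1aa c1ab c1bb rα rβ δ γ0 (update γ 1 t))
      ((1 - δ) * rβ - 2 * (c1ab * (γ 0 - γ0 0) + c1bb * (γ 1 - γ0 1))) (γ 1) := by
  convert hasDerivAt_quadratic (-c1bb) ((1 - δ) * rβ + 2 * c1bb * γ0 1 - 2 * c1ab * (γ 0 - γ0 0))
    (UD c1aa c1ab c1bb rα rβ δ γ0 (update γ 1 0)) (γ 1) using 1
  · funext t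
    simp only [UD_eq, update_self, update_of_ne zero_ne_one]
    ring
  · ring

end SpecialistUtility

theorem specialist_best_response_candidates_regulated_general
    (c1aa c1bb c1ab rα rβ δ θD : ℝ)
    (hc1aa : 0 < c1aa) (hc1bb : 0 < c1bb)
    (hC1inv : IsUnit (!![c1aa, c1ab; c1ab, c1bb] : Matrix (Fin 2) (Fin 2) ℝ).det)
    (γ0 γ1s : Fin 2 → ℝ)
    (hfeas : γ0 0 ≤ γ1s 0 ∧ max (γ0 1) θD ≤ γ1s 1)
    (hmax : ∀ γ1 : Fin 2 → ℝ, γ0 0 ≤ γ1 0 → max (γ0 1) θD ≤ γ1 1 →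
      UD c1aa c1ab c1bb rα rβ δ γ0 γ1 ≤ UD c1aa c1ab c1bb rα rβ δ γ0 γ1s) :
    γ1s = γ0 + ((1 - δ) / 2) •
        ((!![c1aa, c1ab; c1ab, c1bb] : Matrix (Fin 2) (Fin 2) ℝ)⁻¹ *ᵥ ![rα, rβ]) ∨
    γ1s = ![γ0 0, γ0 1 + (1 - δ) * rβ / (2 * c1bb)] ∨
    γ1s = ![γ0 0 + (1 - δ) * rα / (2 * c1aa) - (c1ab / c1aa) * max 0 (θD - γ0 1),
            max (γ0 1) θD] ∨
    γ1s = ![γ0 0, max (γ0 1) θD] := by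
  obtain ⟨hα0, hκ⟩ := hfeas
  have hα := IsMaxOn.eq_or_hasDerivAt_eq_zero_of_Ici (isMaxOn_iff.2 fun t ht ↦ by
      simpa using hmax _ (by simpa using ht) (by simpa using hκ)) hα0
    (hasDerivAt_UD_update_zero c1aa c1ab c1bb rα rβ δ γ0 γ1s)
  have hβ := IsMaxOn.eq_or_hasDerivAt_eq_zero_of_Ici (isMaxOn_iff.2 fun t ht ↦ by
      simpa using hmax _ (by simpa using hα0) (by simpa using ht)) hκ
    (hasDerivAt_UD_update_one c1aa c1ab c1bb rα rβ δ γ0 γ1s)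
  rcases hα with hα | hα <;> rcases hβ with hβ | hβ
  · exact .inr <| .inr <| .inr <| funext <| Fin.forall_fin_two.2 ⟨hα, hβ⟩
  · refine .inr <| .inl <| funext <| Fin.forall_fin_two.2 ⟨hα, ?_⟩
    change γ1s 1 = γ0 1 + (1 - δ) * rβ / (2 * c1bb)
    rw [hα, sub_self] at hβ
    field_simp
    linarith
  · refine .inr <| .inr <| .inl <| funext <| Fin.forall_fin_two.2 ⟨?_, hβ⟩
    change γ1s 0 = γ0 0 + (1 - δ) * rα / (2 * c1aa) - c1ab / c1aa * max 0 (θD - γ0 1)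
    rw [hβ, ← max_sub_sub_right, sub_self] at hα
    field_simp
    linarith
  · refine .inl <| eq_add_smul_inv_mulVec_of_mulVec_sub_eq hC1inv ?_
    refine funext <| Fin.forall_fin_two.2 ⟨?_, ?_⟩ <;>
      simp only [mulVec_fin_two, of_apply, cons_val_zero, cons_val_one, Pi.sub_apply,
        Pi.smul_apply, smul_eq_mul] <;>
      linarith

/-- Under regulation threshold `θD ≥ 0`, any maximizer of the specialist's utility over
the regulated feasible set `{(α, β) : α ≥ α0, β ≥ max(β0, θD)}` belongs to the
four-element candidate set. -/
theorem specialist_best_response_candidates_regulated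
    (c0aa c0bb c0ab c1aa c1bb c1ab rα rβ δ θD : ℝ)
    (hc0aa : 0 < c0aa) (hc0bb : 0 < c0bb) (hc1aa : 0 < c1aa) (hc1bb : 0 < c1bb)
    (hrα : 0 < rα) (hrβ : 0 < rβ) (hδ0 : 0 < δ) (hδ1 : δ < 1) (hθD : 0 ≤ θD)
    (hC1inv : IsUnit (!![c1aa, c1ab; c1ab, c1bb] : Matrix (Fin 2) (Fin 2) ℝ).det)
    (γ0 γ1s : Fin 2 → ℝ)
    (hfeas : γ0 0 ≤ γ1s 0 ∧ max (γ0 1) θD ≤ γ1s 1)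
    (hmax : ∀ γ1 : Fin 2 → ℝ, γ0 0 ≤ γ1 0 → max (γ0 1) θD ≤ γ1 1 →
      UD c1aa c1ab c1bb rα rβ δ γ0 γ1 ≤ UD c1aa c1ab c1bb rα rβ δ γ0 γ1s) :
    γ1s = γ0 + ((1 - δ) / 2) •
        ((!![c1aa, c1ab; c1ab, c1bb] : Matrix (Fin 2) (Fin 2) ℝ)⁻¹ *ᵥ ![rα, rβ]) ∨
    γ1s = ![γ0 0, γ0 1 + (1 - δ) * rβ / (2 * c1bb)] ∨
    γ1s = ![γ0 0 + (1 - δ) * rα / (2 * c1aa) - (c1ab / c1aa) * max 0 (θD - γ0 1),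
            max (γ0 1) θD] ∨
    γ1s = ![γ0 0, max (γ0 1) θD] :=
  specialist_best_response_candidates_regulated_general c1aa c1bb c1ab rα rβ δ θD hc1aa hc1bb hC1inv
    γ0 γ1s hfeas hmax
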